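/- Let (A,C,ψ) be an entwining structure over a field k. Define C_λ^n(A,C,ψ) to be the set of k-linear maps g: C ⊗ A^{⊗(n+1)} → k satisfying g(c ⊗ a₁ ⊗ ... ⊗ a_{n+1}) = (-1)^n g(c^ψ ⊗ a₂ ⊗ ... ⊗ a_{n+1} ⊗ a_{1ψ}). Then C_λ^•(A,C,ψ) is closed under the Hochschild differential δ^n(g)(c,a₁,...,a_{n+2}) = g(c^ψ, a₂,...,a_{n+1}, a_{n+2}a_{1ψ}) + Σ_{i=1}^{n+1} (-1)^i g(c, a₁,...,a_i a_{i+1},...,a_{n+2}); that is, if g ∈ C_λ^n(A,C,ψ) then δ^n(g) ∈ C_λ^{n+1}(A,C,ψ). -/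
import Mathlib


open TensorProduct

/-- An entwining structure `(A, C, ψ)` over a field `k`: a unital `k`-algebra `A`,
a counital `k`-coalgebra `C` and a `k`-linear map `ψ : C ⊗ A → A ⊗ C` satisfying the
entwining axioms of Brzeziński–Majid. -/
structure Entwining (k A C : Type) [Field k] [Ring A] [Algebra k A]
    [AddCommGroup C] [Module k C] [Coalgebra k C] : Type where
  ψ : C ⊗[k] A →ₗ[k] A ⊗[k] C
  mul_compat : ψ ∘ₗ TensorProduct.map (LinearMap.id : C →ₗ[k] C) (LinearMap.mul' k A) =
    TensorProduct.map (LinearMap.mul' k A) (LinearMap.id : C →ₗ[k] C)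
      ∘ₗ (TensorProduct.assoc k A A C).symm.toLinearMap
      ∘ₗ TensorProduct.map (LinearMap.id : A →ₗ[k] A) ψ
      ∘ₗ (TensorProduct.assoc k A C A).toLinearMap
      ∘ₗ TensorProduct.map ψ (LinearMap.id : A →ₗ[k] A)
      ∘ₗ (TensorProduct.assoc k C A A).symm.toLinearMap
  comul_compat : TensorProduct.map (LinearMap.id : A →ₗ[k] A)
        (CoalgebraStruct.comul (R := k) (A := C)) ∘ₗ ψ =
    (TensorProduct.assoc k A C C).toLinearMap
      ∘ₗ TensorProduct.map ψ (LinearMap.id : C →ₗ[k] C)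
      ∘ₗ (TensorProduct.assoc k C A C).symm.toLinearMap
      ∘ₗ TensorProduct.map (LinearMap.id : C →ₗ[k] C) ψ
      ∘ₗ (TensorProduct.assoc k C C A).toLinearMap
      ∘ₗ TensorProduct.map (CoalgebraStruct.comul (R := k) (A := C)) (LinearMap.id : A →ₗ[k] A)
  counit_compat : (TensorProduct.rid k A).toLinearMap
      ∘ₗ TensorProduct.map (LinearMap.id : A →ₗ[k] A)
        (CoalgebraStruct.counit (R := k) (A := C)) ∘ₗ ψ =
    (TensorProduct.lid k A).toLinearMap
      ∘ₗ TensorProduct.map (CoalgebraStruct.counit (R := k) (A := C)) (LinearMap.id : A →ₗ[k] A)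
  unit_compat : ∀ c : C, ψ (c ⊗ₜ[k] (1 : A)) = (1 : A) ⊗ₜ[k] c

variable {k A C : Type}


/-- The vector `(a₁, …, aᵢ aᵢ₊₁, …, a_{n+2})` obtained from `v = (a₁, …, a_{n+2})`
by multiplying the two adjacent entries at positions `i, i+1` (0-indexed). -/
def mergeVec {A : Type} [Mul A] {n : ℕ} (v : Fin (n + 2) → A) (i : Fin (n + 1)) :
    Fin (n + 1) → A :=
  fun j => if j.castSucc < i.castSucc then v j.castSucc
    else if j = i then v i.castSucc * v i.succ else v j.succ

/-- `g ∈ 𝒞^n_λ(A, C, ψ)`: a linear functional `g : C ⊗ A^{⊗(n+1)} → k` (encoded as a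
linear map into multilinear maps) satisfying
`g(c ⊗ a₁ ⊗ … ⊗ a_{n+1}) = (-1)ⁿ g(c^ψ ⊗ a₂ ⊗ … ⊗ a_{n+1} ⊗ a_{1ψ})`,
where `ψ(c ⊗ a₁) = Σᵢ αᵢ ⊗ γᵢ` is any representation of the entwined element. -/
def EntwIsCyclic [Field k] [Ring A] [Algebra k A] [AddCommGroup C] [Module k C] [Coalgebra k C]
    (e : Entwining k A C) (n : ℕ)
    (g : C →ₗ[k] MultilinearMap k (fun _ : Fin (n + 1) => A) k) : Prop :=
  ∀ (c : C) (v : Fin (n + 1) → A) (t : ℕ) (α : Fin t → A) (γ : Fin t → C),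
    e.ψ (c ⊗ₜ[k] v 0) = ∑ i, α i ⊗ₜ[k] γ i →
    g c v = (-1 : k) ^ n *
      ∑ i, g (γ i) (Function.update (fun j : Fin (n + 1) => v (j + 1)) (Fin.last n) (α i))

section Helpers

variable {k A C : Type}

private lemma entw_exists_fin_rep [Field k] [Ring A] [Algebra k A]
    [AddCommGroup C] [Module k C] (x : A ⊗[k] C) :
    ∃ (t : ℕ) (α : Fin t → A) (γ : Fin t → C), x = ∑ i, α i ⊗ₜ[k] γ i := by
  obtain ⟨s, rfl⟩ := TensorProduct.exists_finset x
  refine ⟨Fintype.card s, fun i => ((Fintype.equivFin s).symm i : A × C).1,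
    fun i => ((Fintype.equivFin s).symm i : A × C).2, ?_⟩
  rw [← Finset.sum_coe_sort s]
  exact Fintype.sum_equiv (Fintype.equivFin s) _ _ (by intro x; simp)

variable [Ring A] {n : ℕ}

private lemma entw_mergeVec_val (v : Fin (n + 2) → A) (i : Fin (n + 1)) (j : Fin (n + 1)) :
    mergeVec v i j =
      if j.val < i.val then v ⟨j.val, by omega⟩
      else if j.val = i.val then v ⟨i.val, by omega⟩ * v ⟨i.val + 1, by omega⟩
      else v ⟨j.val + 1, by omega⟩ := by
  simp only [mergeVec, Fin.lt_def, Fin.ext_iff, Fin.coe_castSucc]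
  split_ifs <;>
    first
      | rfl
      | omega
      | (congr 1 <;> simp [Fin.ext_iff])

private lemma entw_cyc_val (v : Fin (n + 2) → A) (a : A) (j : Fin (n + 2)) :
    Function.update (fun j : Fin (n + 2) => v (j + 1)) (Fin.last (n + 1)) a j =
      if h : j.val = n + 1 then a else v ⟨j.val + 1, by omega⟩ := by
  rcases eq_or_ne j (Fin.last (n + 1)) with rfl | hj
  · simp [Fin.last]
  · have hv : j.val ≠ n + 1 := by
      intro h; exact hj (Fin.ext h)
    have : (j + 1 : Fin (n + 2)) = ⟨j.val + 1, by omega⟩ := by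
      simp [Fin.ext_iff, Fin.add_def]; omega
    simp [Function.update, hj, hv, this]

private lemma entw_upd_val {m : ℕ} (f : Fin (m + 1) → A) (a : A) (j : Fin (m + 1)) :
    Function.update f (Fin.last m) a j = if j.val = m then a else f j := by
  rcases eq_or_ne j (Fin.last m) with rfl | hj
  · simp [Fin.last]
  · have hv : j.val ≠ m := by intro h; exact hj (Fin.ext h)
    simp [Function.update, hj, hv]

private lemma entw_E1 (v : Fin (n + 2) → A) (a : A) :
    mergeVec (Function.update (fun j : Fin (n + 2) => v (j + 1)) (Fin.last (n + 1)) a)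
        (Fin.last n)
      = Function.update (fun j : Fin (n + 1) => v j.succ) (Fin.last n)
          (v (Fin.last (n + 1)) * a) := by
  funext j
  rcases eq_or_ne j (Fin.last n) with rfl | hj
  · have h1 : (Fin.last n).castSucc ≠ Fin.last (n + 1) := by
      simp [Fin.ext_iff]
    have h2 : ((Fin.last n).castSucc + 1 : Fin (n + 2)) = Fin.last (n + 1) := by
      simp [Fin.ext_iff, Fin.add_def]
    simp [mergeVec, Function.update, h1, h2]
  · have hjv : j.val < n := by
      have := j.isLt; rcases Fin.ext_iff.not.mp hj with h
      simp [Fin.last] at h; omega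
    have h3 : j.castSucc < (Fin.last n).castSucc := by
      simp [Fin.lt_def, hjv]
    have h4 : j.castSucc ≠ Fin.last (n + 1) := by simp [Fin.ext_iff]; omega
    have h5 : (j.castSucc + 1 : Fin (n + 2)) = j.succ := by
      simp [Fin.ext_iff, Fin.add_def]; try omega
    simp [mergeVec, Function.update, h3, hj, h4, h5]

private lemma entw_E2 (v : Fin (n + 2) → A) (a : A) (m : Fin n) :
    Function.update (fun j : Fin (n + 1) => mergeVec v m.succ (j + 1)) (Fin.last n) a
      = mergeVec (Function.update (fun j : Fin (n + 2) => v (j + 1)) (Fin.last (n + 1)) a)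
          m.castSucc := by
  funext j
  by_cases hj : j.val = n
  · have hm := m.isLt
    rw [entw_upd_val, if_pos hj, entw_mergeVec_val, if_neg (by simp [Fin.coe_castSucc]; omega),
      if_neg (by simp [Fin.coe_castSucc]; omega), entw_cyc_val,
      dif_pos (show (⟨j.val + 1, by omega⟩ : Fin (n + 2)).val = n + 1 by simp [hj])]
  · have hj' : j.val < n := by have := j.isLt; omega
    have hadd : ((j + 1 : Fin (n + 1))).val = j.val + 1 := by
      simp [Fin.add_def]; omega
    rw [entw_upd_val, if_neg hj, entw_mergeVec_val, entw_mergeVec_val]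
    simp only [hadd, Fin.val_succ, Fin.coe_castSucc, entw_cyc_val]
    split_ifs <;>
      first
        | rfl
        | omega
        | (congr 1 <;> (try congr 1) <;> simp [Fin.ext_iff] <;> omega)

private lemma entw_E3 (v : Fin (n + 2) → A) (a b : A) :
    Function.update
      (fun j : Fin (n + 1) =>
        Function.update (fun j' : Fin (n + 2) => v (j' + 1)) (Fin.last (n + 1)) a j.succ)
      (Fin.last n)
      (Function.update (fun j' : Fin (n + 2) => v (j' + 1)) (Fin.last (n + 1)) a
          (Fin.last (n + 1)) * b)
      = Function.update (fun j : Fin (n + 1) => mergeVec v 0 (j + 1)) (Fin.last n) (a * b) := by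
  funext j
  simp only [entw_cyc_val, Fin.val_last, Fin.val_succ]
  rw [dif_pos trivial]
  by_cases hj : j.val = n
  · rw [entw_upd_val, if_pos hj, entw_upd_val, if_pos hj]
  · have hj' : j.val < n := by have := j.isLt; omega
    have hadd : ((j + 1 : Fin (n + 1))).val = j.val + 1 := by
      simp [Fin.add_def]; omega
    rw [entw_upd_val, if_neg hj, entw_upd_val, if_neg hj, dif_neg (by omega), entw_mergeVec_val]
    simp only [hadd]
    rw [if_neg (by simp), if_neg (by simp)]

private lemma entw_cyc_zero (v : Fin (n + 2) → A) (a : A) :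
    Function.update (fun j : Fin (n + 2) => v (j + 1)) (Fin.last (n + 1)) a 0 = v 1 := by
  rw [entw_cyc_val, dif_neg (by simp)]
  exact congrArg v (Fin.ext (by simp))

private lemma entw_merge_zero_zero (v : Fin (n + 2) → A) :
    mergeVec v 0 0 = v 0 * v 1 := by
  rw [entw_mergeVec_val, if_neg (by simp), if_pos rfl]
  exact congrArg₂ (· * ·) (congrArg v (Fin.ext (by simp))) (congrArg v (Fin.ext (by simp)))

private lemma entw_merge_succ_zero (v : Fin (n + 2) → A) (m : Fin n) :
    mergeVec v m.succ 0 = v 0 := by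
  rw [entw_mergeVec_val, if_pos (by simp)]
  exact congrArg v (Fin.ext (by simp))

private lemma entw_psi_mul [Field k] [Algebra k A] [AddCommGroup C] [Module k C] [Coalgebra k C]
    (e : Entwining k A C) (c : C) (a b : A) {t : ℕ} {α : Fin t → A} {γ : Fin t → C}
    (h : e.ψ (c ⊗ₜ[k] a) = ∑ i, α i ⊗ₜ[k] γ i)
    {T : Fin t → ℕ} {β : ∀ i, Fin (T i) → A} {δ : ∀ i, Fin (T i) → C}
    (h2 : ∀ i, e.ψ (γ i ⊗ₜ[k] b) = ∑ j, β i j ⊗ₜ[k] δ i j) :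
    e.ψ (c ⊗ₜ[k] (a * b)) = ∑ i, ∑ j, (α i * β i j) ⊗ₜ[k] δ i j := by
  have H := LinearMap.congr_fun e.mul_compat (c ⊗ₜ[k] (a ⊗ₜ[k] b))
  simpa [LinearMap.mul'_apply, sum_tmul, tmul_sum, h, h2] using H

private lemma entw_sigma_reindex {M : Type} [AddCommMonoid M] {t : ℕ} {T : Fin t → ℕ}
    (F : ∀ i : Fin t, Fin (T i) → M) :
    ∑ x : Fin (Fintype.card ((i : Fin t) × Fin (T i))),
      F ((Fintype.equivFin ((i : Fin t) × Fin (T i))).symm x).1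
        ((Fintype.equivFin ((i : Fin t) × Fin (T i))).symm x).2
      = ∑ i, ∑ j, F i j := by
  rw [Fintype.sum_equiv (Fintype.equivFin ((i : Fin t) × Fin (T i))).symm _
    (fun s => F s.1 s.2) (fun x => rfl)]
  rw [← Finset.univ_sigma_univ, Finset.sum_sigma]

end Helpers

/-- The cyclic subspace `𝒞^•_λ(A,C,ψ)` is closed under the Hochschild
differential `δⁿ(g)(c, a₁, …, a_{n+2}) = g(c^ψ, a₂, …, a_{n+1}, a_{n+2}a_{1ψ}) +
Σ_{i=1}^{n+1} (-1)ⁱ g(c, a₁, …, aᵢaᵢ₊₁, …, a_{n+2})`. -/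
theorem cyclic_closed_under_hochschild_differential
    [Field k] [Ring A] [Algebra k A] [AddCommGroup C] [Module k C] [Coalgebra k C]
    (e : Entwining k A C) (n : ℕ)
    (g : C →ₗ[k] MultilinearMap k (fun _ : Fin (n + 1) => A) k)
    (δg : C →ₗ[k] MultilinearMap k (fun _ : Fin (n + 2) => A) k)
    (hδ : ∀ (c : C) (v : Fin (n + 2) → A) (t : ℕ) (α : Fin t → A) (γ : Fin t → C),
      e.ψ (c ⊗ₜ[k] v 0) = ∑ i, α i ⊗ₜ[k] γ i →
      δg c v =
        (∑ i, g (γ i) (Function.update (fun j : Fin (n + 1) => v j.succ) (Fin.last n)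
            (v (Fin.last (n + 1)) * α i)))
        + ∑ i : Fin (n + 1), (-1 : k) ^ (i.val + 1) * g c (mergeVec v i))
    (hg : EntwIsCyclic e n g) :
    EntwIsCyclic e (n + 1) δg := by
  intro c v t α γ hrep
  choose T β δ' hβ using fun i : Fin t => entw_exists_fin_rep (k := k) (e.ψ (γ i ⊗ₜ[k] v 1))
  -- combined representation for ψ(c ⊗ (v 0 * v 1))
  set S := (i : Fin t) × Fin (T i) with hS
  let eqv : S ≃ Fin (Fintype.card S) := Fintype.equivFin S
  let αβ : Fin (Fintype.card S) → A := fun x => α (eqv.symm x).1 * β (eqv.symm x).1 (eqv.symm x).2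
  let γδ : Fin (Fintype.card S) → C := fun x => δ' (eqv.symm x).1 (eqv.symm x).2
  have hcomb : e.ψ (c ⊗ₜ[k] (v 0 * v 1)) = ∑ x, αβ x ⊗ₜ[k] γδ x := by
    rw [entw_psi_mul e c (v 0) (v 1) hrep hβ]
    exact (entw_sigma_reindex (fun i j => (α i * β i j) ⊗ₜ[k] δ' i j)).symm
  -- expansion of the left-hand side
  have hzero : g c (mergeVec v 0) = (-1 : k) ^ n * ∑ i, ∑ j, g (δ' i j)
      (Function.update (fun j' : Fin (n + 1) => mergeVec v 0 (j' + 1)) (Fin.last n)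
        (α i * β i j)) := by
    rw [hg c (mergeVec v 0) _ αβ γδ (by rw [entw_merge_zero_zero]; exact hcomb)]
    congr 1
    exact entw_sigma_reindex (fun i j => g (δ' i j)
      (Function.update (fun j' : Fin (n + 1) => mergeVec v 0 (j' + 1)) (Fin.last n)
        (α i * β i j)))
  have hsucc : ∀ m : Fin n, g c (mergeVec v m.succ) = (-1 : k) ^ n *
      ∑ i, g (γ i) (mergeVec
        (Function.update (fun j : Fin (n + 2) => v (j + 1)) (Fin.last (n + 1)) (α i))
        m.castSucc) := by
    intro m
    rw [hg c (mergeVec v m.succ) t α γ (by rw [entw_merge_succ_zero]; exact hrep)]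
    congr 1
    exact Finset.sum_congr rfl (by intro i _; rw [entw_E2])
  -- expansion of each right-hand side summand
  have hR : ∀ i, δg (γ i)
      (Function.update (fun j : Fin (n + 2) => v (j + 1)) (Fin.last (n + 1)) (α i)) =
      (∑ j, g (δ' i j) (Function.update (fun j' : Fin (n + 1) => mergeVec v 0 (j' + 1))
          (Fin.last n) (α i * β i j)))
      + ((∑ m : Fin n, (-1 : k) ^ (m.val + 1) * g (γ i) (mergeVec
          (Function.update (fun j : Fin (n + 2) => v (j + 1)) (Fin.last (n + 1)) (α i))
          m.castSucc))
        + (-1 : k) ^ (n + 1) * g (γ i) (Function.update (fun j : Fin (n + 1) => v j.succ)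
            (Fin.last n) (v (Fin.last (n + 1)) * α i))) := by
    intro i
    rw [hδ (γ i) _ (T i) (β i) (δ' i) (by rw [entw_cyc_zero]; exact hβ i)]
    rw [Fin.sum_univ_castSucc, entw_E1]
    simp only [Fin.coe_castSucc, Fin.val_last]
    congr 1
    exact Finset.sum_congr rfl (by intro j _; rw [entw_E3])
  rw [hδ c v t α γ hrep, Fin.sum_univ_succ]
  simp only [hR, hzero, hsucc, Fin.val_succ, Fin.val_zero]
  have hmterm : ∀ m : Fin n,
      (-1 : k) ^ (m.val + 1 + 1) * ((-1 : k) ^ n *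
        ∑ i, g (γ i) (mergeVec
          (Function.update (fun j : Fin (n + 2) => v (j + 1)) (Fin.last (n + 1)) (α i))
          m.castSucc))
      = (-1 : k) ^ (n + 1) * ((-1 : k) ^ (m.val + 1) *
        ∑ i, g (γ i) (mergeVec
          (Function.update (fun j : Fin (n + 2) => v (j + 1)) (Fin.last (n + 1)) (α i))
          m.castSucc)) := by
    intro m
    rw [← mul_assoc, ← mul_assoc, ← pow_add, ← pow_add]
    congr 2
    omega
  rw [Finset.sum_add_distrib, Finset.sum_add_distrib, Finset.sum_comm, ← Finset.mul_sum]
  simp only [← Finset.mul_sum]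
  rw [Finset.sum_congr rfl (fun m _ => hmterm m), ← Finset.mul_sum]
  rw [mul_add, mul_add]
  rw [← mul_assoc ((-1 : k) ^ (n + 1)) ((-1 : k) ^ (n + 1)), ← pow_add,
    Even.neg_one_pow (⟨n + 1, by omega⟩ : Even (n + 1 + (n + 1))), one_mul]
  rw [← mul_assoc ((-1 : k) ^ (0 + 1)) ((-1 : k) ^ n), ← pow_add,
    show 0 + 1 + n = n + 1 from by omega]
  ring
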